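/- Let σ_w² > 0, 0 ≤ P_min < P_max, p_j ∈ [0,1], and P_a > 0 be reals with max(P_min, P_L) < P_a < P_max, where P_L = P_max − P_min, and let μ = (1−p_j)·δ_{σ_w²} + p_j·Unif[σ_w² + P_min, σ_w² + P_max]. Then the supremum over γ ∈ ℝ of μ([γ − P_a, γ)) equals max(1 − p_j·(P_max − P_a)/P_L, p_j); equivalently, the warden's minimum total detection error probability ξ* equals min(p_j·(P_max − P_a)/P_L, 1 − p_j). -/

import Mathlib

/-! The window `[γ - Pa, γ)` has length `Pa > P_L`, so it can swallow the whole jamming interval,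
but then (as `Pa > Pmin`) it misses the noise-only atom at `σw`: mass `pj`. A window containing the
atom ends at most at `σw + Pa < σw + Pmax`, so it catches the atom and at most the part
`[σw + Pmin, σw + Pa)` of the jamming interval: mass `1 - pj + pj (Pa - Pmin) / P_L`. Both bounds
are attained, at `γ = σw + Pmax` and `γ = σw + Pa`. -/

open MeasureTheory Set

lemma Real.volume_Ico_inter_Icc (a b c d : ℝ) :
    volume (Ico a b ∩ Icc c d) = ENNReal.ofReal (min b d - max a c) := by
  apply le_antisymm
  · calc volume (Ico a b ∩ Icc c d) ≤ volume (Icc (max a c) (min b d)) := by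
          apply measure_mono
          rintro x ⟨⟨hax, hxb⟩, hcx, hxd⟩
          exact ⟨max_le hax hcx, le_min hxb.le hxd⟩
      _ = ENNReal.ofReal (min b d - max a c) := Real.volume_Icc
  · rw [← Real.volume_Ioo]
    apply measure_mono
    rintro x ⟨hx₁, hx₂⟩
    exact ⟨⟨(le_max_left a c).trans hx₁.le, hx₂.trans_le (min_le_left b d)⟩,
      (le_max_right a c).trans hx₁.le, (hx₂.trans_le (min_le_right b d)).le⟩

noncomputable def jammedPowerLaw (σw Pmin Pmax pj : ℝ) : Measure ℝ :=
  ENNReal.ofReal (1 - pj) • Measure.dirac σw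
    + ENNReal.ofReal pj •
      ((ENNReal.ofReal (Pmax - Pmin))⁻¹ • volume.restrict (Icc (σw + Pmin) (σw + Pmax)))

section

variable {σw Pmin Pmax pj Pa : ℝ}

lemma jammedPowerLaw_Ico (hlt : Pmin < Pmax) (a b : ℝ) :
    jammedPowerLaw σw Pmin Pmax pj (Ico a b)
      = (Ico a b).indicator (fun _ ↦ ENNReal.ofReal (1 - pj)) σw
        + ENNReal.ofReal pj *
          ENNReal.ofReal ((min b (σw + Pmax) - max a (σw + Pmin)) / (Pmax - Pmin)) := by
  rw [ENNReal.ofReal_div_of_pos (sub_pos.mpr hlt), ENNReal.div_eq_inv_mul,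
    ← Real.volume_Ico_inter_Icc]
  simp [jammedPowerLaw, Measure.dirac_apply' _ measurableSet_Ico,
    Measure.restrict_apply measurableSet_Ico, indicator_apply]

lemma ofReal_one_sub_add_mul_div (hlt : Pmin < Pmax) (hpj0 : 0 ≤ pj) (hpj1 : pj ≤ 1)
    (hPa : Pmin ≤ Pa) :
    ENNReal.ofReal (1 - pj) + ENNReal.ofReal pj * ENNReal.ofReal ((Pa - Pmin) / (Pmax - Pmin))
      = ENNReal.ofReal (1 - pj * (Pmax - Pa) / (Pmax - Pmin)) := by
  have hPL : 0 < Pmax - Pmin := sub_pos.mpr hlt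
  rw [← ENNReal.ofReal_mul hpj0, ← ENNReal.ofReal_add (by linarith) (by positivity)]
  congr 1
  field_simp
  ring

lemma jammedPowerLaw_window_le (hlt : Pmin < Pmax) (hpj0 : 0 ≤ pj) (hpj1 : pj ≤ 1)
    (hPa : Pmin ≤ Pa) (γ : ℝ) :
    jammedPowerLaw σw Pmin Pmax pj (Ico (γ - Pa) γ)
      ≤ ENNReal.ofReal (max (1 - pj * (Pmax - Pa) / (Pmax - Pmin)) pj) := by
  have hPL : 0 < Pmax - Pmin := sub_pos.mpr hlt
  have hmax := le_max_right (γ - Pa) (σw + Pmin)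
  rw [jammedPowerLaw_Ico hlt, ENNReal.ofReal_max]
  by_cases hσw : σw ∈ Ico (γ - Pa) γ
  · refine le_max_of_le_left ?_
    rw [indicator_of_mem hσw, ← ofReal_one_sub_add_mul_div hlt hpj0 hpj1 hPa]
    gcongr _ + _ * ENNReal.ofReal (?_ / _)
    linarith [hσw.1, min_le_left γ (σw + Pmax)]
  · refine le_max_of_le_right ?_
    rw [indicator_of_notMem hσw, zero_add]
    refine mul_le_of_le_one_right' (ENNReal.ofReal_le_one.mpr ((div_le_one hPL).mpr ?_))
    linarith [min_le_right γ (σw + Pmax)]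

lemma jammedPowerLaw_window_atom (hPmin : 0 ≤ Pmin) (hlt : Pmin < Pmax) (hpj0 : 0 ≤ pj)
    (hpj1 : pj ≤ 1) (hPminPa : Pmin < Pa) (hPaPmax : Pa ≤ Pmax) :
    jammedPowerLaw σw Pmin Pmax pj (Ico (σw + Pa - Pa) (σw + Pa))
      = ENNReal.ofReal (1 - pj * (Pmax - Pa) / (Pmax - Pmin)) := by
  have hσw : σw ∈ Ico (σw + Pa - Pa) (σw + Pa) := ⟨by linarith, by linarith⟩
  rw [jammedPowerLaw_Ico hlt, indicator_of_mem hσw, min_eq_left (by linarith),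
    max_eq_right (by linarith), add_sub_add_left_eq_sub,
    ofReal_one_sub_add_mul_div hlt hpj0 hpj1 hPminPa.le]

lemma jammedPowerLaw_window_uniform (hlt : Pmin < Pmax) (hPaPmax : Pa < Pmax)
    (hPL : Pmax - Pmin ≤ Pa) :
    jammedPowerLaw σw Pmin Pmax pj (Ico (σw + Pmax - Pa) (σw + Pmax)) = ENNReal.ofReal pj := by
  have hσw : σw ∉ Ico (σw + Pmax - Pa) (σw + Pmax) := fun h ↦ by linarith [h.1]
  rw [jammedPowerLaw_Ico hlt, indicator_of_notMem hσw, min_self, max_eq_right (by linarith),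
    add_sub_add_left_eq_sub, div_self (sub_pos.mpr hlt).ne', ENNReal.ofReal_one, zero_add, mul_one]

theorem iSup_jammedPowerLaw_window (hPmin : 0 ≤ Pmin) (hlt : Pmin < Pmax) (hpj0 : 0 ≤ pj)
    (hpj1 : pj ≤ 1) (hPminPa : Pmin < Pa) (hPL : Pmax - Pmin ≤ Pa) (hPaPmax : Pa < Pmax) :
    ⨆ γ : ℝ, jammedPowerLaw σw Pmin Pmax pj (Ico (γ - Pa) γ)
      = ENNReal.ofReal (max (1 - pj * (Pmax - Pa) / (Pmax - Pmin)) pj) := by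
  refine le_antisymm (iSup_le (jammedPowerLaw_window_le hlt hpj0 hpj1 hPminPa.le)) ?_
  rw [ENNReal.ofReal_max]
  refine max_le (le_iSup_of_le (σw + Pa) ?_) (le_iSup_of_le (σw + Pmax) ?_)
  · rw [jammedPowerLaw_window_atom hPmin hlt hpj0 hpj1 hPminPa hPaPmax.le]
  · rw [jammedPowerLaw_window_uniform hlt hPaPmax hPL]

end

theorem xi_star_case_max_Pmin_PL_lt_Pa_lt_Pmax_general
    (σw Pmin Pmax pj Pa : ℝ)
    (hPmin : 0 ≤ Pmin) (hlt : Pmin < Pmax)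
    (hpj0 : 0 ≤ pj) (hpj1 : pj ≤ 1)
    (hcase1 : max Pmin (Pmax - Pmin) < Pa) (hcase2 : Pa < Pmax)
    (μ : Measure ℝ)
    (hμ : μ = ENNReal.ofReal (1 - pj) • Measure.dirac σw
        + ENNReal.ofReal pj •
          ((ENNReal.ofReal (Pmax - Pmin))⁻¹ •
            volume.restrict (Icc (σw + Pmin) (σw + Pmax)))) :
    (⨆ γ : ℝ, μ (Ico (γ - Pa) γ))
      = ENNReal.ofReal (max (1 - pj * (Pmax - Pa) / (Pmax - Pmin)) pj) ∧
    (1 - ⨆ γ : ℝ, μ (Ico (γ - Pa) γ))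
      = ENNReal.ofReal (min (pj * (Pmax - Pa) / (Pmax - Pmin)) (1 - pj)) := by
  obtain ⟨hPminPa, hPL⟩ := max_lt_iff.mp hcase1
  have hsup : ⨆ γ : ℝ, μ (Ico (γ - Pa) γ)
      = ENNReal.ofReal (max (1 - pj * (Pmax - Pa) / (Pmax - Pmin)) pj) :=
    hμ ▸ iSup_jammedPowerLaw_window hPmin hlt hpj0 hpj1 hPminPa hPL.le hcase2
  refine ⟨hsup, ?_⟩
  rw [hsup, ← ENNReal.ofReal_one, ← ENNReal.ofReal_sub _ (hpj0.trans (le_max_right _ _)),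
    ← min_sub_sub_left, sub_sub_cancel]

theorem xi_star_case_max_Pmin_PL_lt_Pa_lt_Pmax
    (σw Pmin Pmax pj Pa : ℝ)
    (hσw : 0 < σw) (hPmin : 0 ≤ Pmin) (hlt : Pmin < Pmax)
    (hpj0 : 0 ≤ pj) (hpj1 : pj ≤ 1) (hPa : 0 < Pa)
    (hcase1 : max Pmin (Pmax - Pmin) < Pa) (hcase2 : Pa < Pmax)
    (μ : Measure ℝ)
    (hμ : μ = ENNReal.ofReal (1 - pj) • Measure.dirac σw
        + ENNReal.ofReal pj •
          ((ENNReal.ofReal (Pmax - Pmin))⁻¹ •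
            volume.restrict (Icc (σw + Pmin) (σw + Pmax)))) :
    (⨆ γ : ℝ, μ (Ico (γ - Pa) γ))
      = ENNReal.ofReal (max (1 - pj * (Pmax - Pa) / (Pmax - Pmin)) pj) ∧
    (1 - ⨆ γ : ℝ, μ (Ico (γ - Pa) γ))
      = ENNReal.ofReal (min (pj * (Pmax - Pa) / (Pmax - Pmin)) (1 - pj)) :=
  xi_star_case_max_Pmin_PL_lt_Pa_lt_Pmax_general σw Pmin Pmax pj Pa hPmin hlt hpj0 hpj1 hcase1
    hcase2 μ hμ
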